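/- arXiv:1403.4993 — 4 statements merged into one kernel-verified Lean document; each statement's English description precedes it below -/
import Mathlib

section
/- The real symplectic group Sp_{2n}(\mathbb{R}), realized as the intersection of Sp_{2n}(\mathbb{C}) with SU(n,n) inside GL_{2n}(\mathbb{C}), acts transitively on the set D_+ of h-positive complex lines in \mathbb{P}(\mathbb{C}^{2n}), where h is a Hermitian form of signature (n,n) compatible with the symplectic form. -/
open scoped ComplexConjugate

/-- The complex bilinear form `b(z,w) = zᵗw` on `ℂ^{2n}`. -/
noncomputable def bform (n : ℕ) (z w : Fin (2 * n) → ℂ) : ℂ := ∑ j, z j * w j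

/-- The map `J` with `J(eᵢ) = e_{n+i}` for `i ≤ n` and `J(eᵢ) = -e_{i-n}` for `i > n`. -/
noncomputable def Jmap (n : ℕ) (z : Fin (2 * n) → ℂ) : Fin (2 * n) → ℂ := fun j =>
  if h : (j : ℕ) < n then -z ⟨(j : ℕ) + n, by omega⟩
  else z ⟨(j : ℕ) - n, by omega⟩

/-- The map `E = Id_n ⊕ (-Id_n)`. -/
noncomputable def Emap (n : ℕ) (z : Fin (2 * n) → ℂ) : Fin (2 * n) → ℂ := fun j =>
  if (j : ℕ) < n then z j else -z j

/-- The complex symplectic form `ω(z,w) = zᵗ J w`. -/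
noncomputable def ωform (n : ℕ) (z w : Fin (2 * n) → ℂ) : ℂ := ∑ j, z j * Jmap n w j

/-- The Hermitian form `h(z,w) = zᵗ E conj w` of signature `(n,n)`. -/
noncomputable def hform (n : ℕ) (z w : Fin (2 * n) → ℂ) : ℂ := ∑ j, z j * Emap n (fun i => conj (w i)) j

/-- The antilinear map `φ(w) = -J E conj w`. -/
noncomputable def φmap (n : ℕ) (w : Fin (2 * n) → ℂ) : Fin (2 * n) → ℂ :=
  -Jmap n (Emap n (fun i => conj (w i)))

/-!
The `φ`-fixed vectors form a real form of `ℂ^{2n}` on which `ω` is purely imaginary, and `G₀` is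
its symplectic group. Splitting `z = u + i v` with `u, v` real gives `ω(u, v) = i h(z, z) / 2`, so
after rescaling `z'` it is enough to move a real pair `(u, v)` to a real pair `(u', v')` with the
same pairing. The symplectic transvections `x ↦ x + l ω(x, a) a` with `a` real and `l` imaginary
lie in `G₀`; one of them moves `u` to `u'` when `ω(u, u') ≠ 0`, and in general two of them do,
via an intermediate real vector pairing nontrivially with both. The same trick, now fixing `u'`,
then moves the image of `v` to `v'`.
-/

/-- A complex symplectic form `ω` with a compatible real structure `φ`; the Hermitian form of
signature `(n, n)` is `h(z, w) = ω(z, φ w)`. -/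
structure RealSymplecticSpace (V : Type*) [AddCommGroup V] [Module ℂ V] where
  ω : LinearMap.BilinForm ℂ V
  φ : V →ₗ⋆[ℂ] V
  isAlt : ω.IsAlt
  separatingLeft : ω.SeparatingLeft
  φ_φ : ∀ x, φ (φ x) = x
  ω_φ_φ : ∀ x y, ω (φ x) (φ y) = -conj (ω x y)

namespace RealSymplecticSpace

open Complex

variable {V : Type*} [AddCommGroup V] [Module ℂ V] (S : RealSymplecticSpace V)

lemma ω_swap (x y : V) : S.ω y x = -S.ω x y := (LinearMap.IsAlt.neg S.isAlt x y).symm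

/-- For an `ω`-isometry, commuting with `φ` is equivalent to preserving `h`. -/
def realSymplecticGroup : Subgroup (V ≃ₗ[ℂ] V) where
  carrier := {T | (∀ u v, S.ω (T u) (T v) = S.ω u v) ∧ ∀ x, T (S.φ x) = S.φ (T x)}
  one_mem' := ⟨fun _ _ => rfl, fun _ => rfl⟩
  mul_mem' := fun ⟨hω, hφ⟩ ⟨hω', hφ'⟩ =>
    ⟨fun u v => by simp only [LinearEquiv.mul_apply, hω, hω'],
     fun x => by simp only [LinearEquiv.mul_apply, hφ, hφ']⟩
  inv_mem' := fun {T} ⟨hω, hφ⟩ =>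
    ⟨fun u v => by rw [← hω]; simp,
     fun x => T.injective <| by simp [hφ]⟩

variable {S}

lemma ω_φ_apply_of_mem {T : V ≃ₗ[ℂ] V} (hT : T ∈ S.realSymplecticGroup) (u v : V) :
    S.ω (T u) (S.φ (T v)) = S.ω u (S.φ v) := by
  rw [← hT.2, hT.1]

lemma φ_apply_of_mem {T : V ≃ₗ[ℂ] V} (hT : T ∈ S.realSymplecticGroup) {v : V}
    (hv : S.φ v = v) : S.φ (T v) = T v := by
  rw [← hT.2, hv]

lemma conj_ω_of_real {u v : V} (hu : S.φ u = u) (hv : S.φ v = v) :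
    conj (S.ω u v) = -S.ω u v := by
  have := S.ω_φ_φ u v
  rw [hu, hv] at this
  linear_combination this

variable (S) in
def transvection (a : V) (l : ℂ) : V ≃ₗ[ℂ] V :=
  LinearEquiv.transvection (f := l • S.ω.flip a) (v := a) (by simp [S.isAlt a])

lemma transvection_apply (a : V) (l : ℂ) (x : V) :
    S.transvection a l x = x + (l * S.ω x a) • a := rfl

lemma transvection_mem {a : V} {l : ℂ} (ha : S.φ a = a) (hl : conj l = -l) :
    S.transvection a l ∈ S.realSymplecticGroup := by
  refine ⟨fun u v => ?_, fun x => ?_⟩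
  · simp only [transvection_apply, map_add, map_smul, LinearMap.add_apply,
      LinearMap.smul_apply, smul_eq_mul, S.isAlt a]
    linear_combination (l * S.ω u a) * S.ω_swap v a
  · have hxa : S.ω (S.φ x) a = -conj (S.ω x a) := by
      conv_lhs => rw [← ha]
      exact S.ω_φ_φ x a
    rw [transvection_apply, transvection_apply, map_add, LinearMap.map_smulₛₗ, ha, hxa,
      map_mul, hl]
    congr 1
    ring_nf

lemma exists_mem_apply_eq_add {u a : V} (hu : S.φ u = u) (ha : S.φ a = a)
    (hua : S.ω u a ≠ 0) :
    ∃ T ∈ S.realSymplecticGroup, T u = u + a ∧ ∀ x, S.ω x a = 0 → T x = x := by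
  have hl : conj (S.ω u a)⁻¹ = -(S.ω u a)⁻¹ := by
    rw [map_inv₀, conj_ω_of_real hu ha, inv_neg]
  refine ⟨S.transvection a (S.ω u a)⁻¹, transvection_mem ha hl, ?_, fun x hx => ?_⟩
  · rw [transvection_apply, inv_mul_cancel₀ hua, one_smul]
  · rw [transvection_apply, hx, mul_zero, zero_smul, add_zero]

lemma exists_real_ω_ne_zero {u : V} (hu0 : u ≠ 0) :
    ∃ w, S.φ w = w ∧ S.ω u w ≠ 0 := by
  obtain ⟨x, hx⟩ : ∃ x, S.ω u x ≠ 0 := by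
    by_contra! h
    exact hu0 (S.separatingLeft u h)
  -- `x` is a combination of the real vectors `x + φ x` and `I • (x - φ x)`
  by_contra! h
  have hre := h (x + S.φ x) (by rw [map_add, S.φ_φ, add_comm])
  have him := h (I • (x - S.φ x)) (by
    rw [LinearMap.map_smulₛₗ, map_sub, S.φ_φ, conj_I, neg_smul, ← smul_neg, neg_sub])
  simp only [map_add, map_sub, map_smul, smul_eq_mul] at hre him
  exact hx (by linear_combination (hre - I * him) / 2 + (S.ω u x - S.ω u (S.φ x)) / 2 * I_mul_I)

lemma exists_real_ω_ne_zero_ω_ne_zero {u u' : V} (hu0 : u ≠ 0) (hu'0 : u' ≠ 0) :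
    ∃ w, S.φ w = w ∧ S.ω u w ≠ 0 ∧ S.ω w u' ≠ 0 := by
  obtain ⟨w₁, hw₁, huw₁⟩ := exists_real_ω_ne_zero (S := S) hu0
  obtain ⟨w₂, hw₂, hu'w₂⟩ := exists_real_ω_ne_zero (S := S) hu'0
  rw [← neg_ne_zero, ← S.ω_swap] at hu'w₂
  by_cases h₁ : S.ω w₁ u' = 0
  · by_cases h₂ : S.ω u w₂ = 0
    · refine ⟨w₁ + w₂, by rw [map_add, hw₁, hw₂], ?_, ?_⟩
      · rwa [map_add, h₂, add_zero]
      · rwa [map_add, LinearMap.add_apply, h₁, zero_add]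
    · exact ⟨w₂, hw₂, h₂, hu'w₂⟩
  · exact ⟨w₁, hw₁, huw₁, h₁⟩

lemma exists_mem_apply_eq_of_ω_ne_zero {u u' : V} (hu : S.φ u = u) (hu' : S.φ u' = u')
    (h : S.ω u u' ≠ 0) : ∃ T ∈ S.realSymplecticGroup, T u = u' := by
  have ha : S.φ (u' - u) = u' - u := by rw [map_sub, hu, hu']
  have hua : S.ω u (u' - u) = S.ω u u' := by rw [map_sub, S.isAlt u, sub_zero]
  obtain ⟨T, hT, hTu, -⟩ := exists_mem_apply_eq_add hu ha (hua ▸ h)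
  exact ⟨T, hT, by rw [hTu, add_sub_cancel]⟩

lemma exists_mem_apply_eq {u u' : V} (hu : S.φ u = u) (hu' : S.φ u' = u')
    (hu0 : u ≠ 0) (hu'0 : u' ≠ 0) : ∃ T ∈ S.realSymplecticGroup, T u = u' := by
  obtain ⟨w, hw, huw, hwu'⟩ := exists_real_ω_ne_zero_ω_ne_zero (S := S) hu0 hu'0
  obtain ⟨T₁, hT₁, hT₁u⟩ := exists_mem_apply_eq_of_ω_ne_zero hu hw huw
  obtain ⟨T₂, hT₂, hT₂w⟩ := exists_mem_apply_eq_of_ω_ne_zero hw hu' hwu'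
  exact ⟨T₂ * T₁, mul_mem hT₂ hT₁, by rw [LinearEquiv.mul_apply, hT₁u, hT₂w]⟩

lemma exists_mem_fixing_apply_eq_of_ω_ne_zero {u v v' : V} (hv : S.φ v = v) (hv' : S.φ v' = v')
    (h : S.ω u v = S.ω u v') (hvv' : S.ω v v' ≠ 0) :
    ∃ T ∈ S.realSymplecticGroup, T u = u ∧ T v = v' := by
  have ha : S.φ (v' - v) = v' - v := by rw [map_sub, hv, hv']
  have hva : S.ω v (v' - v) = S.ω v v' := by rw [map_sub, S.isAlt v, sub_zero]
  obtain ⟨T, hT, hTv, hfix⟩ := exists_mem_apply_eq_add hv ha (hva ▸ hvv')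
  exact ⟨T, hT, hfix u (by rw [map_sub, h, sub_self]), by rw [hTv, add_sub_cancel]⟩

lemma exists_mem_fixing_apply_eq {u v v' : V} (hu : S.φ u = u) (hv : S.φ v = v)
    (hv' : S.φ v' = v') (h : S.ω u v = S.ω u v') (h0 : S.ω u v ≠ 0) :
    ∃ T ∈ S.realSymplecticGroup, T u = u ∧ T v = v' := by
  by_cases hvv' : S.ω v v' = 0
  · -- pass through `u + v`, which pairs nontrivially with both `v` and `v'`
    have hw : S.φ (u + v) = u + v := by rw [map_add, hu, hv]
    obtain ⟨T₁, hT₁, hT₁u, hT₁v⟩ := exists_mem_fixing_apply_eq_of_ω_ne_zero (u := u) hv hw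
      (by rw [map_add, S.isAlt u, zero_add])
      (by rwa [map_add, S.isAlt v, add_zero, S.ω_swap, neg_ne_zero])
    obtain ⟨T₂, hT₂, hT₂u, hT₂w⟩ := exists_mem_fixing_apply_eq_of_ω_ne_zero (u := u) hw hv'
      (by rw [map_add, S.isAlt u, zero_add, h])
      (by rwa [LinearMap.map_add₂, hvv', add_zero, ← h])
    exact ⟨T₂ * T₁, mul_mem hT₂ hT₁, by simp [hT₁u, hT₂u], by simp [hT₁v, hT₂w]⟩
  · exact exists_mem_fixing_apply_eq_of_ω_ne_zero hv hv' h hvv'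

lemma exists_mem_apply_pair {u v u' v' : V} (hu : S.φ u = u) (hv : S.φ v = v)
    (hu' : S.φ u' = u') (hv' : S.φ v' = v') (h : S.ω u v = S.ω u' v') (h0 : S.ω u v ≠ 0) :
    ∃ T ∈ S.realSymplecticGroup, T u = u' ∧ T v = v' := by
  have hu0 : u ≠ 0 := by rintro rfl; simp at h0
  have hu'0 : u' ≠ 0 := by rintro rfl; simp [h] at h0
  obtain ⟨T₁, hT₁, hT₁u⟩ := exists_mem_apply_eq hu hu' hu0 hu'0
  obtain ⟨T₂, hT₂, hT₂u', hT₂v⟩ := exists_mem_fixing_apply_eq hu' (φ_apply_of_mem hT₁ hv) hv'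
    (by rw [← h, ← hT₁.1 u v, hT₁u]) (by rwa [← hT₁u, hT₁.1])
  exact ⟨T₂ * T₁, mul_mem hT₂ hT₁, by simp [hT₁u, hT₂u'], hT₂v⟩

lemma exists_real_decomposition (z : V) :
    ∃ u v, S.φ u = u ∧ S.φ v = v ∧ z = u + I • v ∧ S.ω u v = I * S.ω z (S.φ z) / 2 := by
  refine ⟨(1 / 2 : ℂ) • (z + S.φ z), (-I / 2) • (z - S.φ z), ?_, ?_, ?_, ?_⟩
  · rw [LinearMap.map_smulₛₗ, map_add, S.φ_φ, map_div₀, map_one, map_ofNat, add_comm]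
  · rw [LinearMap.map_smulₛₗ, map_sub, S.φ_φ, map_div₀, map_neg, conj_I, map_ofNat,
      neg_neg, ← neg_sub, smul_neg, ← neg_smul, neg_div]
  · rw [smul_smul]
    have hI : I * (-I / 2) = 1 / 2 := by linear_combination (-1 / 2 : ℂ) * I_mul_I
    rw [hI]
    module
  · simp only [map_smul, map_add, map_sub, LinearMap.smul_apply, LinearMap.add_apply,
      smul_eq_mul, S.isAlt z, S.isAlt (S.φ z)]
    linear_combination (-I / 4) * S.ω_swap z (S.φ z)

lemma exists_mem_apply_eq_of_ω_φ_eq {z z' : V} (h : S.ω z (S.φ z) = S.ω z' (S.φ z'))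
    (h0 : S.ω z (S.φ z) ≠ 0) : ∃ T ∈ S.realSymplecticGroup, T z = z' := by
  obtain ⟨u, v, hu, hv, rfl, huv⟩ := S.exists_real_decomposition z
  obtain ⟨u', v', hu', hv', rfl, huv'⟩ := S.exists_real_decomposition z'
  obtain ⟨T, hT, hTu, hTv⟩ := exists_mem_apply_pair hu hv hu' hv' (by rw [huv, huv', h])
    (by rw [huv]; simpa [I_ne_zero] using h0)
  exact ⟨T, hT, by rw [map_add, map_smul, hTu, hTv]⟩

lemma exists_mem_apply_eq_smul {z z' : V} {r r' : ℝ} (hr : 0 < r) (hr' : 0 < r')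
    (hz : S.ω z (S.φ z) = r) (hz' : S.ω z' (S.φ z') = r') :
    ∃ T ∈ S.realSymplecticGroup, ∃ c : ℂ, c ≠ 0 ∧ T z = c • z' := by
  set c : ℝ := √(r / r')
  have hc : (c : ℂ) * c * r' = r := by
    exact_mod_cast (by rw [Real.mul_self_sqrt (div_pos hr hr').le]; field_simp : c * c * r' = r)
  have hcz' : S.ω ((c : ℂ) • z') (S.φ ((c : ℂ) • z')) = r := by
    simp only [LinearMap.map_smulₛₗ, map_smul, LinearMap.smul_apply, hz', conj_ofReal,
      smul_eq_mul, ← mul_assoc, hc]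
  obtain ⟨T, hT, hTz⟩ := exists_mem_apply_eq_of_ω_φ_eq (hz.trans hcz'.symm)
    (by rw [hz]; exact_mod_cast hr.ne')
  exact ⟨T, hT, c, by exact_mod_cast (Real.sqrt_pos.2 (div_pos hr hr')).ne', hTz⟩

end RealSymplecticSpace

namespace Fin

def halfSwap (n : ℕ) (j : Fin (2 * n)) : Fin (2 * n) :=
  if h : (j : ℕ) < n then ⟨j + n, by omega⟩ else ⟨j - n, by omega⟩

lemma val_halfSwap (n : ℕ) (j : Fin (2 * n)) :
    (halfSwap n j : ℕ) = if (j : ℕ) < n then (j : ℕ) + n else (j : ℕ) - n := by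
  unfold halfSwap; split_ifs <;> rfl

lemma halfSwap_lt_iff (n : ℕ) (j : Fin (2 * n)) : (halfSwap n j : ℕ) < n ↔ ¬(j : ℕ) < n := by
  rw [val_halfSwap]; split_ifs <;> omega

lemma halfSwap_involutive (n : ℕ) : Function.Involutive (halfSwap n) := fun j => by
  have := j.isLt
  ext
  rw [val_halfSwap, val_halfSwap]
  split_ifs <;> omega

lemma sum_comp_halfSwap {M : Type*} [AddCommMonoid M] (n : ℕ) (f : Fin (2 * n) → M) :
    ∑ j, f (halfSwap n j) = ∑ j, f j :=
  Equiv.sum_comp (halfSwap_involutive n).toPerm f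

def halfSign (n : ℕ) (j : Fin (2 * n)) : ℂ := if (j : ℕ) < n then -1 else 1

lemma halfSign_halfSwap (n : ℕ) (j : Fin (2 * n)) :
    halfSign n (halfSwap n j) = -halfSign n j := by
  simp only [halfSign, halfSwap_lt_iff]
  split_ifs <;> norm_num

lemma conj_halfSign (n : ℕ) (j : Fin (2 * n)) : conj (halfSign n j) = halfSign n j := by
  unfold halfSign; split_ifs <;> simp

end Fin

section Standard

open Fin

lemma Jmap_apply (n : ℕ) (w : Fin (2 * n) → ℂ) (j : Fin (2 * n)) :
    Jmap n w j = halfSign n j * w (halfSwap n j) := by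
  unfold Jmap halfSign halfSwap
  split_ifs <;> simp

lemma ωform_eq_sum (n : ℕ) (z w : Fin (2 * n) → ℂ) :
    ωform n z w = ∑ j, halfSign n j * z j * w (halfSwap n j) := by
  simp only [ωform, Jmap_apply]
  exact Finset.sum_congr rfl fun j _ => by ring

lemma φmap_apply (n : ℕ) (w : Fin (2 * n) → ℂ) (j : Fin (2 * n)) :
    φmap n w j = -conj (w (halfSwap n j)) := by
  simp only [φmap, Pi.neg_apply, Jmap_apply, Emap, halfSign, halfSwap_lt_iff]
  split_ifs <;> simp

lemma hform_eq_ωform_φmap (n : ℕ) (z w : Fin (2 * n) → ℂ) :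
    hform n z w = ωform n z (φmap n w) := by
  simp only [hform, ωform_eq_sum, φmap_apply, halfSwap_involutive n _, Emap, halfSign]
  exact Finset.sum_congr rfl fun j _ => by split_ifs <;> ring

lemma ωform_self (n : ℕ) (z : Fin (2 * n) → ℂ) : ωform n z z = 0 := by
  have h : ωform n z z = -ωform n z z := by
    conv_lhs => rw [ωform_eq_sum, ← sum_comp_halfSwap]
    rw [ωform_eq_sum, ← Finset.sum_neg_distrib]
    refine Finset.sum_congr rfl fun j _ => ?_
    rw [halfSign_halfSwap, halfSwap_involutive n j]
    ring
  linear_combination h / 2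

lemma ωform_φmap_φmap (n : ℕ) (z w : Fin (2 * n) → ℂ) :
    ωform n (φmap n z) (φmap n w) = -conj (ωform n z w) := by
  conv_lhs => rw [ωform_eq_sum, ← sum_comp_halfSwap]
  rw [ωform_eq_sum, map_sum, ← Finset.sum_neg_distrib]
  refine Finset.sum_congr rfl fun j _ => ?_
  simp only [φmap_apply, halfSign_halfSwap, halfSwap_involutive n _, map_mul, conj_halfSign]
  ring

lemma eq_zero_of_ωform_eq_zero (n : ℕ) (z : Fin (2 * n) → ℂ) (h : ∀ w, ωform n z w = 0) :
    z = 0 := by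
  funext j
  have hj := h (Pi.single (halfSwap n j) 1)
  rw [ωform_eq_sum, Finset.sum_eq_single j (fun k _ hk => by
    simp [(halfSwap_involutive n).injective.eq_iff, hk]) (by simp)] at hj
  have : halfSign n j ≠ 0 := by unfold halfSign; split_ifs <;> norm_num
  simpa [this] using hj

noncomputable def RealSymplecticSpace.standard (n : ℕ) :
    RealSymplecticSpace (Fin (2 * n) → ℂ) where
  ω := LinearMap.mk₂ ℂ (ωform n)
    (fun _ _ _ => by
      simp only [ωform_eq_sum, Pi.add_apply, ← Finset.sum_add_distrib]
      exact Finset.sum_congr rfl fun _ _ => by ring)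
    (fun _ _ _ => by
      simp only [ωform_eq_sum, Pi.smul_apply, smul_eq_mul, Finset.mul_sum]
      exact Finset.sum_congr rfl fun _ _ => by ring)
    (fun _ _ _ => by
      simp only [ωform_eq_sum, Pi.add_apply, ← Finset.sum_add_distrib]
      exact Finset.sum_congr rfl fun _ _ => by ring)
    (fun _ _ _ => by
      simp only [ωform_eq_sum, Pi.smul_apply, smul_eq_mul, Finset.mul_sum]
      exact Finset.sum_congr rfl fun _ _ => by ring)
  φ :=
    { toFun := φmap n
      map_add' := fun _ _ => funext fun _ => by simp only [φmap_apply, Pi.add_apply, map_add]; ring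
      map_smul' := fun _ _ => funext fun _ => by
        simp only [φmap_apply, Pi.smul_apply, smul_eq_mul, map_mul]; ring }
  isAlt := ωform_self n
  separatingLeft := eq_zero_of_ωform_eq_zero n
  φ_φ := fun _ => funext fun _ => by simp [φmap_apply, halfSwap_involutive n _]
  ω_φ_φ := ωform_φmap_φmap n

end Standard

/-- The real symplectic group `Sp_{2n}(ℝ)`, realized as the group of complex
linear automorphisms of `ℂ^{2n}` preserving both the symplectic form `ω` and the Hermitian
form `h` of signature `(n,n)`, acts transitively on the set `D₊` of `h`-positive complex
lines: for any two `h`-positive lines (spanned by `z` and `z'`) there is such an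
automorphism `T` carrying the first line onto the second. -/
theorem stmt8 (n : ℕ) (z z' : Fin (2 * n) → ℂ)
    (hz : ∃ r : ℝ, 0 < r ∧ hform n z z = r)
    (hz' : ∃ r : ℝ, 0 < r ∧ hform n z' z' = r) :
    ∃ T : (Fin (2 * n) → ℂ) ≃ₗ[ℂ] (Fin (2 * n) → ℂ),
      (∀ u v, ωform n (T u) (T v) = ωform n u v) ∧
      (∀ u v, hform n (T u) (T v) = hform n u v) ∧
      ∃ c : ℂ, c ≠ 0 ∧ T z = c • z' := by
  obtain ⟨r, hr, hzr⟩ := hz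
  obtain ⟨r', hr', hzr'⟩ := hz'
  rw [hform_eq_ωform_φmap] at hzr hzr'
  obtain ⟨T, hT, c, hc, hTz⟩ :=
    (RealSymplecticSpace.standard n).exists_mem_apply_eq_smul hr hr' hzr hzr'
  refine ⟨T, hT.1, fun u v => ?_, c, hc, hTz⟩
  simp only [hform_eq_ωform_φmap]
  exact RealSymplecticSpace.ω_φ_apply_of_mem hT u v
end

section
/- The complex orthogonal group SO_{2n}(\mathbb{C}) acts transitively on the set of b-isotropic n-dimensional subspaces of \mathbb{C}^{2n} lying in a fixed connected component of the orthogonal Grassmannian; moreover the subgroup SO_{2n-1}(\mathbb{C}) fixing the vector e_{2n} already acts transitively on this set. -/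
/-- The standard symmetric bilinear form `b(z,w) = zᵗw` on `ℂ^m`. -/
noncomputable def bf (m : ℕ) (z w : Fin m → ℂ) : ℂ := ∑ j, z j * w j

/-- A subspace is `b`-isotropic if `b` vanishes identically on it. -/
def IsIsotropic (m : ℕ) (W : Submodule ℂ (Fin m → ℂ)) : Prop :=
  ∀ w ∈ W, ∀ w' ∈ W, bf m w w' = 0

/-!
A Lagrangian (isotropic, half-dimensional) subspace `W` carries a hyperbolic basis `(l, r)`: `l`
spans `W`, `r` is isotropic and `B (l i) (r j) = δᵢⱼ`; a linear map sending one hyperbolic basis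
to another is an isometry. For Lagrangians `W, W'`, extend a basis `a` of `W ⊓ W'` by `c` in `W`
and by `d` in `W'` with `B (c i) (d j) = δᵢⱼ`, and complete to a hyperbolic basis `(a, c; b, d)`.
Swapping `c ↔ d` is an isometry carrying `W` to `W'`, of determinant `(-1) ^ (n - dim (W ⊓ W'))`.
An isometry stabilising `W` is block triangular with diagonal blocks `A` and `A⁻ᵀ`, so has
determinant `1`; hence every isometry carrying `W` to `W'` has that determinant, and the parity
condition (the two subspaces lying in the same component) says exactly that it is `1`. Finally,
if `B e e ≠ 0`, hyperbolic bases for `W` and `W'` can both be chosen with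
`e = r₀ + (B e e / 2) • l₀`, and the isometry between them fixes `e`.
-/

open Module Submodule

theorem Equiv.Perm.sign_sumComm_self (α : Type*) [Fintype α] [DecidableEq α] :
    Equiv.Perm.sign (Equiv.sumComm α α) = (-1) ^ Fintype.card α := by
  have h : (Equiv.sumComm α α : Equiv.Perm (α ⊕ α)) = (Equiv.boolProdEquivSum α).permCongr
      (Equiv.prodCongrLeft fun _ => Equiv.swap false true) := by
    ext (a | a) <;> simp [Equiv.permCongr_apply, Equiv.boolProdEquivSum]
  rw [h, Equiv.Perm.sign_permCongr, Equiv.Perm.sign_prodCongrLeft]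
  simp

theorem LinearMap.det_basis_equiv_perm {K V ι : Type*} [Field K] [AddCommGroup V] [Module K V]
    [Fintype ι] [DecidableEq ι] (b : Basis ι K V) (σ : Equiv.Perm ι) :
    LinearMap.det (b.equiv b σ : V →ₗ[K] V) = Equiv.Perm.sign σ := by
  rw [← LinearMap.det_toMatrix b]
  have : LinearMap.toMatrix b b (b.equiv b σ) = (σ.permMatrix K).transpose := by
    ext i j
    simp [LinearMap.toMatrix_apply, Basis.equiv_apply, Finsupp.single_apply, Equiv.Perm.permMatrix,
      PEquiv.toMatrix_apply, eq_comm]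
  rw [this, Matrix.det_transpose, Matrix.det_permutation]

namespace LinearMap.BilinForm

variable {K V : Type*} [Field K] [AddCommGroup V] [Module K V] {B : LinearMap.BilinForm K V}
  {ι κ : Type*}

structure IsHyperbolic [DecidableEq ι] (B : LinearMap.BilinForm K V) (l r : ι → V) :
    Prop where
  isotropic_left : ∀ i j, B (l i) (l j) = 0
  isotropic_right : ∀ i j, B (r i) (r j) = 0
  apply_left_right : ∀ i j, B (l i) (r j) = if i = j then 1 else 0

structure IsLagrangian (B : LinearMap.BilinForm K V) (W : Submodule K V) : Prop where
  isotropic : ∀ v ∈ W, ∀ w ∈ W, B v w = 0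
  two_mul_finrank : 2 * finrank K W = finrank K V

theorem linearIndependent_sum_elim_of_pairing [Fintype ι] [Fintype κ] [DecidableEq κ]
    {x : ι → V} {y w : κ → V} (hx : LinearIndependent K x) (hxw : ∀ i k, B (x i) (w k) = 0)
    (hyw : ∀ j k, B (y j) (w k) = if j = k then 1 else 0) :
    LinearIndependent K (Sum.elim x y) := by
  rw [Fintype.linearIndependent_iff] at hx ⊢
  intro g hg
  have hy : ∀ k, g (.inr k) = 0 := fun k => by
    simpa [Fintype.sum_sum_type, hxw, hyw] using congrArg (B · (w k)) hg
  have hx' := hx (g ∘ .inl) (by simpa [Fintype.sum_sum_type, hy] using hg)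
  rintro (i | k)
  exacts [hx' i, hy k]

theorem exists_apply_eq_of_linearIndependent [FiniteDimensional K V] (hB : B.Nondegenerate)
    {x : κ → V} (hx : LinearIndependent K x) (t : κ → K) : ∃ v, ∀ k, B v (x k) = t k := by
  obtain ⟨f, hf⟩ := LinearMap.exists_extend ((Basis.span hx).constr K t)
  refine ⟨(B.toDual hB).symm f, fun k => ?_⟩
  have := congrArg (· (Basis.span hx k)) hf
  simp only [LinearMap.comp_apply, Basis.constr_basis, Submodule.subtype_apply,
    Basis.coe_span_apply] at this
  rw [apply_toDual_symm_apply, this]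

theorem exists_isHyperbolic_of_linearIndependent [FiniteDimensional K V] [Fintype ι]
    [DecidableEq ι] [NeZero (2 : K)] (hB : B.Nondegenerate) (hsymm : B.IsSymm)
    {a : ι → V} {v : κ → V} (hlin : LinearIndependent K (Sum.elim a v))
    (ha : ∀ i j, B (a i) (a j) = 0) (hav : ∀ i k, B (a i) (v k) = 0) :
    ∃ b : ι → V, B.IsHyperbolic a b ∧ ∀ i k, B (b i) (v k) = 0 := by
  choose y hy using fun j => exists_apply_eq_of_linearIndependent hB hlin
    (Sum.elim (fun i => if j = i then 1 else 0) 0)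
  have hya : ∀ j i, B (y j) (a i) = if j = i then 1 else 0 := fun j i => hy j (.inl i)
  have hyv : ∀ j k, B (y j) (v k) = 0 := fun j k => hy j (.inr k)
  -- Correcting `y` by a multiple of `a` makes it isotropic without changing its pairings.
  set b : ι → V := fun j => y j - (1 / 2 : K) • ∑ i, B (y j) (y i) • a i
  have hb : ∀ j w, B (b j) w = B (y j) w - 1 / 2 * ∑ i, B (y j) (y i) * B (a i) w := by
    intro j w
    simp [b, map_sum, smul_eq_mul]
  have hab : ∀ i j, B (a i) (b j) = if i = j then 1 else 0 := by
    intro i j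
    rw [hsymm.eq, hb]
    simp [hya, ha, eq_comm]
  refine ⟨b, ⟨ha, fun j k => ?_, hab⟩, fun j k => by simp [hb, hyv, hav]⟩
  have hay : ∀ i j, B (a i) (y j) = if j = i then 1 else 0 := fun i j => by
    rw [hsymm.eq, hya]
  rw [hb, hsymm.eq (y j), hb]
  simp only [hab, hay, mul_ite, mul_one, mul_zero, Finset.sum_ite_eq, Finset.sum_ite_eq',
    Finset.mem_univ, if_true]
  rw [hsymm.eq (y k) (y j)]
  field_simp
  ring

theorem basis_repr_apply_eq_of_pairing {ι' : Type*} [Fintype ι'] [DecidableEq ι']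
    (b : Basis ι' K V) {w : V} {p : ι'} (hw : ∀ q, B (b q) w = if q = p then 1 else 0) (x : V) :
    b.repr x p = B x w := by
  conv_rhs => rw [← b.sum_repr x]
  simp only [map_sum, map_smul, LinearMap.sum_apply, LinearMap.smul_apply, hw, smul_eq_mul,
    mul_ite, mul_one, mul_zero, Finset.sum_ite_eq', Finset.mem_univ, if_true]

namespace IsHyperbolic

variable [DecidableEq ι] {l r : ι → V}

theorem linearIndependent [Fintype ι] (hsymm : B.IsSymm) (h : B.IsHyperbolic l r) :
    LinearIndependent K (Sum.elim l r) := by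
  have hrl : ∀ i j, B (r i) (l j) = if j = i then 1 else 0 := fun i j => by
    rw [hsymm.eq, h.apply_left_right]
  rw [Fintype.linearIndependent_iff]
  intro g hg
  rintro (i | i)
  · simpa [Fintype.sum_sum_type, h.isotropic_right, h.apply_left_right] using
      congrArg (B · (r i)) hg
  · simpa [Fintype.sum_sum_type, h.isotropic_left, hrl] using congrArg (B · (l i)) hg

theorem sum_elim (hsymm : B.IsSymm) [DecidableEq κ] {l' r' : κ → V}
    (h : B.IsHyperbolic l r) (h' : B.IsHyperbolic l' r')
    (horth : ∀ p q, B (Sum.elim l r p) (Sum.elim l' r' q) = 0) :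
    B.IsHyperbolic (Sum.elim l l') (Sum.elim r r') := by
  have horth' : ∀ p q, B (Sum.elim l' r' q) (Sum.elim l r p) = 0 := fun p q => by
    rw [hsymm.eq, horth]
  refine ⟨?_, ?_, ?_⟩ <;> rintro (i | i) (j | j)
  · exact h.isotropic_left i j
  · exact horth (.inl i) (.inl j)
  · exact horth' (.inl j) (.inl i)
  · exact h'.isotropic_left i j
  · exact h.isotropic_right i j
  · exact horth (.inr i) (.inr j)
  · exact horth' (.inr j) (.inr i)
  · exact h'.isotropic_right i j
  · simp [h.apply_left_right]
  · simpa using horth (.inl i) (.inr j)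
  · simpa using horth' (.inr j) (.inl i)
  · simp [h'.apply_left_right]

theorem sum_elim_swap (hsymm : B.IsSymm) [DecidableEq κ] {a b : ι → V} {c d : κ → V}
    (h : B.IsHyperbolic (Sum.elim a c) (Sum.elim b d)) :
    B.IsHyperbolic (Sum.elim a d) (Sum.elim b c) := by
  have hl := h.isotropic_left
  have hr := h.isotropic_right
  have hlr := h.apply_left_right
  refine ⟨?_, ?_, ?_⟩ <;> rintro (i | i) (j | j)
  · exact hl (.inl i) (.inl j)
  · simpa using hlr (.inl i) (.inr j)
  · simpa [hsymm.eq (d i)] using hlr (.inl j) (.inr i)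
  · exact hr (.inr i) (.inr j)
  · exact hr (.inl i) (.inl j)
  · simpa [hsymm.eq (b i)] using hlr (.inr j) (.inl i)
  · simpa using hlr (.inr i) (.inl j)
  · exact hl (.inr i) (.inr j)
  · simpa using hlr (.inl i) (.inl j)
  · exact hl (.inl i) (.inr j)
  · exact hr (.inr i) (.inl j)
  · simpa [hsymm.eq (d i), eq_comm] using hlr (.inr j) (.inr i)

variable [FiniteDimensional K V] [Fintype ι]

noncomputable def basis (hsymm : B.IsSymm) (h : B.IsHyperbolic l r)
    (hcard : 2 * Fintype.card ι = finrank K V) : Basis (ι ⊕ ι) K V :=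
  basisOfLinearIndependentOfCardEqFinrank' _ (h.linearIndependent hsymm)
    (by rw [Fintype.card_sum, ← hcard, two_mul])

variable {hsymm : B.IsSymm} (h : B.IsHyperbolic l r) {hcard : 2 * Fintype.card ι = finrank K V}

@[simp]
theorem coe_basis : ⇑(h.basis hsymm hcard) = Sum.elim l r :=
  coe_basisOfLinearIndependentOfCardEqFinrank' ..

theorem basis_repr_inr (x : V) (i : ι) : (h.basis hsymm hcard).repr x (.inr i) = B x (l i) := by
  refine basis_repr_apply_eq_of_pairing _ (fun q => ?_) x
  rcases q with j | j
  · simp [h.isotropic_left]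
  · simp [hsymm.eq (r j), h.apply_left_right, eq_comm]

theorem isOrthogonal_of_comp (hsymm : B.IsSymm) (h : B.IsHyperbolic l r)
    (hcard : 2 * Fintype.card ι = finrank K V) {T : V →ₗ[K] V}
    (hT : B.IsHyperbolic (T ∘ l) (T ∘ r)) : B.IsOrthogonal T := by
  have hTB : B.compl₁₂ T T = B := by
    refine ext_basis (h.basis hsymm hcard) ?_
    rintro (i | i) (j | j)
    · simpa [coe_basis, h.isotropic_left] using hT.isotropic_left i j
    · simpa [coe_basis, h.apply_left_right] using hT.apply_left_right i j
    · simpa [coe_basis, hsymm.eq (r i), hsymm.eq (T (r i)), h.apply_left_right] using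
        hT.apply_left_right j i
    · simpa [coe_basis, h.isotropic_right] using hT.isotropic_right i j
  exact fun x y => LinearMap.congr_fun₂ hTB x y

theorem exists_isOrthogonal_swap [Fintype κ] [DecidableEq κ] (hsymm : B.IsSymm) {a b : ι → V}
    {c d : κ → V} (h : B.IsHyperbolic (Sum.elim a c) (Sum.elim b d))
    (hcard : 2 * Fintype.card (ι ⊕ κ) = finrank K V) :
    ∃ T : V ≃ₗ[K] V, B.IsOrthogonal T ∧ T ∘ Sum.elim a c = Sum.elim a d ∧
      LinearMap.det (T : V →ₗ[K] V) = (-1) ^ Fintype.card κ := by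
  let BV := h.basis hsymm hcard
  let π : Equiv.Perm ((ι ⊕ κ) ⊕ (ι ⊕ κ)) := (Equiv.sumSumSumComm ι ι κ κ).permCongr
    (Equiv.sumCongr (Equiv.refl _) (Equiv.sumComm κ κ))
  let T := BV.equiv BV π
  have hT : ∀ p, T (BV p) = BV (π p) := fun p => BV.equiv_apply p BV π
  have hl : T ∘ Sum.elim a c = Sum.elim a d := by
    ext (i | i) : 1
    · simpa [BV, π, Equiv.permCongr_apply] using hT (.inl (.inl i))
    · simpa [BV, π, Equiv.permCongr_apply] using hT (.inl (.inr i))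
  have hr : T ∘ Sum.elim b d = Sum.elim b c := by
    ext (i | i) : 1
    · simpa [BV, π, Equiv.permCongr_apply] using hT (.inr (.inl i))
    · simpa [BV, π, Equiv.permCongr_apply] using hT (.inr (.inr i))
  refine ⟨T, isOrthogonal_of_comp hsymm h hcard ?_, hl, ?_⟩
  · rw [LinearEquiv.coe_coe, hl, hr]
    exact h.sum_elim_swap hsymm
  · rw [LinearMap.det_basis_equiv_perm, Equiv.Perm.sign_permCongr, Equiv.Perm.sign_sumCongr,
      Equiv.Perm.sign_refl, one_mul, Equiv.Perm.sign_sumComm_self]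
    push_cast
    rfl

end IsHyperbolic

theorem exists_isHyperbolic_sum_elim [FiniteDimensional K V] [Fintype ι] [DecidableEq ι]
    [Fintype κ] [DecidableEq κ] [NeZero (2 : K)] (hB : B.Nondegenerate) (hsymm : B.IsSymm)
    {a : ι → V} {c d : κ → V} (hac : LinearIndependent K (Sum.elim a c))
    (hiso : ∀ p q, B (Sum.elim a c p) (Sum.elim a c q) = 0) (hd : ∀ i j, B (d i) (d j) = 0)
    (had : ∀ i j, B (a i) (d j) = 0) (hcd : ∀ i j, B (c i) (d j) = if i = j then 1 else 0) :
    ∃ b : ι → V, B.IsHyperbolic (Sum.elim a c) (Sum.elim b d) := by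
  have hacd : LinearIndependent K (Sum.elim a (Sum.elim c d)) := by
    have h := linearIndependent_sum_elim_of_pairing (y := d) (w := c) hac
      (by rintro (i | i) j; exacts [hiso (.inl i) (.inr j), hiso (.inr i) (.inr j)])
      (fun j k => by simp [hsymm.eq (d j), hcd, eq_comm])
    convert h.comp _ (Equiv.sumAssoc ι κ κ).symm.injective using 1
    ext (i | i | i) <;> rfl
  obtain ⟨b, hab, hbcd⟩ := exists_isHyperbolic_of_linearIndependent hB hsymm hacd
    (fun i j => hiso (.inl i) (.inl j))
    (by rintro i (j | j); exacts [hiso (.inl i) (.inr j), had i j])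
  refine ⟨b, hab.sum_elim hsymm ⟨fun i j => hiso (.inr i) (.inr j), hd, hcd⟩ ?_⟩
  rintro (i | i) (j | j)
  exacts [hiso (.inl i) (.inr j), had i j, hbcd i (.inl j), hbcd i (.inr j)]

theorem exists_linearIndependent_span_eq [FiniteDimensional K V] (W : Submodule K V) {k : ℕ}
    (hk : finrank K W = k) :
    ∃ a : Fin k → V, LinearIndependent K a ∧ span K (Set.range a) = W := by
  let b := Module.finBasisOfFinrankEq K W hk
  refine ⟨W.subtype ∘ b, b.linearIndependent.map' _ W.ker_subtype, ?_⟩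
  rw [Set.range_comp, span_image, b.span_eq, Submodule.map_top, range_subtype]

theorem span_range_eq_of_linearIndependent [FiniteDimensional K V] [Fintype ι]
    {W : Submodule K V} {x : ι → V} (hmem : ∀ i, x i ∈ W) (hx : LinearIndependent K x)
    (hcard : Fintype.card ι = finrank K W) : span K (Set.range x) = W :=
  eq_of_le_of_finrank_eq (span_le.2 (Set.range_subset_iff.2 hmem))
    (by rw [finrank_span_eq_card hx, hcard])

theorem exists_linearIndependent_mem_apply_eq_zero [FiniteDimensional K V] {W : Submodule K V}
    {k : ℕ} (hk : finrank K W = k + 1) {w₀ e : V} (hw₀W : w₀ ∈ W) (hw₀e : B w₀ e = 1) :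
    ∃ u : Fin k → V, LinearIndependent K u ∧ (∀ i, u i ∈ W) ∧ ∀ i, B (u i) e = 0 := by
  set g : W →ₗ[K] K := (B.flip e).domRestrict W
  have hg : LinearMap.range g = ⊤ :=
    LinearMap.range_eq_top.2 fun t => ⟨t • ⟨w₀, hw₀W⟩, by simp [g, hw₀e]⟩
  have hker : finrank K (LinearMap.ker g) = k := by
    have := LinearMap.finrank_range_add_finrank_ker g
    rw [hg, finrank_top, finrank_self, hk] at this
    omega
  obtain ⟨u, hu, hspan⟩ := exists_linearIndependent_span_eq (LinearMap.ker g) hker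
  refine ⟨fun i => (u i : V), hu.map' W.subtype W.ker_subtype, fun i => (u i).2, fun i => ?_⟩
  exact LinearMap.mem_ker.1 (hspan ▸ subset_span ⟨i, rfl⟩ : u i ∈ LinearMap.ker g)

namespace IsLagrangian

variable [FiniteDimensional K V] {W : Submodule K V}

theorem orthogonal_eq (hW : B.IsLagrangian W) (hB : B.Nondegenerate) : B.orthogonal W = W := by
  refine (eq_of_le_of_finrank_eq (fun v hv => ?_) ?_).symm
  · exact (mem_orthogonal_iff).2 fun w hw => hW.isotropic w hw v hv
  · rw [finrank_orthogonal hB, ← hW.two_mul_finrank]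
    omega

theorem mem_of_forall_apply_eq_zero (hW : B.IsLagrangian W) (hB : B.Nondegenerate) {v : V}
    (hv : ∀ w ∈ W, B w v = 0) : v ∈ W := by
  rw [← hW.orthogonal_eq hB]
  exact mem_orthogonal_iff.2 hv

theorem det_eq_one_of_mapsTo [NeZero (2 : K)] (hW : B.IsLagrangian W) (hB : B.Nondegenerate)
    (hsymm : B.IsSymm) {S : V →ₗ[K] V} (hS : B.IsOrthogonal S) (hSW : ∀ w ∈ W, S w ∈ W) :
    LinearMap.det S = 1 := by
  obtain ⟨a, ha, hspan⟩ := exists_linearIndependent_span_eq W rfl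
  have haW : ∀ i, a i ∈ W := fun i => hspan ▸ subset_span ⟨i, rfl⟩
  obtain ⟨b, hab, -⟩ := exists_isHyperbolic_of_linearIndependent hB hsymm
    (ha.sum_type (linearIndependent_empty_type (v := fun e : Empty => e.elim))
      (by simp [Set.range_eq_empty]))
    (fun i j => hW.isotropic _ (haW i) _ (haW j)) (fun _ e => e.elim)
  have hcard : 2 * Fintype.card (Fin (finrank K W)) = finrank K V := by
    simpa using hW.two_mul_finrank
  set BV := hab.basis hsymm hcard
  have hBVl : ∀ i, BV (.inl i) = a i := fun i => by simp [BV]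
  have hBVr : ∀ i, BV (.inr i) = b i := fun i => by simp [BV]
  set M := LinearMap.toMatrix BV BV S
  -- In the basis `(a, b)` the matrix of `S` is block upper triangular, and `S` being an
  -- isometry forces the diagonal blocks to be inverse transposes of each other.
  have hSa : ∀ i k, BV.repr (S (a i)) (.inr k) = 0 := fun i k => by
    rw [hab.basis_repr_inr]
    exact hW.isotropic _ (hSW _ (haW i)) _ (haW k)
  have hM₂₁ : M.toBlocks₂₁ = 0 := by
    ext k i
    simpa [M, Matrix.toBlocks₂₁, LinearMap.toMatrix_apply, hBVl] using hSa i k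
  have hAD : M.toBlocks₁₁.transpose * M.toBlocks₂₂ = 1 := by
    ext i j
    have hexp := congrArg (B · (S (b j))) (BV.sum_repr (S (a i)))
    simp only [Fintype.sum_sum_type, hSa, zero_smul, Finset.sum_const_zero, add_zero, map_sum,
      map_smul, LinearMap.sum_apply, LinearMap.smul_apply, smul_eq_mul, hS (a i) (b j),
      hab.apply_left_right, hBVl] at hexp
    simp only [Matrix.mul_apply, Matrix.transpose_apply, Matrix.toBlocks₁₁, Matrix.toBlocks₂₂,
      Matrix.of_apply, M, LinearMap.toMatrix_apply, hBVl, hBVr, Matrix.one_apply, ← hexp]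
    refine Finset.sum_congr rfl fun k _ => ?_
    rw [hab.basis_repr_inr, hsymm.eq (a k)]
  have hdet := congrArg Matrix.det hAD
  rw [Matrix.det_mul, Matrix.det_transpose, Matrix.det_one] at hdet
  rw [← LinearMap.det_toMatrix BV, ← Matrix.fromBlocks_toBlocks (LinearMap.toMatrix BV BV S)]
  rw [← hdet, ← Matrix.det_fromBlocks_zero₂₁ _ M.toBlocks₁₂, ← hM₂₁]

theorem exists_isHyperbolic_adapted [NeZero (2 : K)] (hW : B.IsLagrangian W)
    (hB : B.Nondegenerate) (hsymm : B.IsSymm) {k : ℕ} (hk : finrank K W = k + 1) {e : V}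
    (he : B e e ≠ 0) :
    ∃ l r : Fin k ⊕ Unit → V, B.IsHyperbolic l r ∧ span K (Set.range l) = W ∧
      e = r (.inr ()) + (B e e / 2) • l (.inr ()) := by
  obtain ⟨w, hwW, hwe⟩ : ∃ w ∈ W, B w e ≠ 0 := by
    by_contra! h
    have heW := hW.mem_of_forall_apply_eq_zero hB h
    exact he (hW.isotropic e heW e heW)
  set w₀ := (B w e)⁻¹ • w
  have hw₀W : w₀ ∈ W := W.smul_mem _ hwW
  have hw₀e : B w₀ e = 1 := by simp [w₀, hwe]
  obtain ⟨u, hu, huW, hue⟩ := exists_linearIndependent_mem_apply_eq_zero hk hw₀W hw₀e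
  set z₀ := e - (B e e / 2) • w₀
  have hw₀w₀ : B w₀ w₀ = 0 := hW.isotropic _ hw₀W _ hw₀W
  have hz₀z₀ : B z₀ z₀ = 0 := by
    simp only [z₀, map_sub, map_smul, LinearMap.sub_apply, LinearMap.smul_apply, smul_eq_mul,
      hsymm.eq e w₀, hw₀e, hw₀w₀]
    field_simp
    ring
  have hw₀z₀ : B w₀ z₀ = 1 := by simp [z₀, hw₀e, hw₀w₀]
  have huz₀ : ∀ i, B (u i) z₀ = 0 := fun i => by
    simp [z₀, hue, hW.isotropic _ (huW i) _ hw₀W]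
  have huw₀ : LinearIndependent K (Sum.elim u fun _ : Unit => w₀) :=
    linearIndependent_sum_elim_of_pairing (w := fun _ : Unit => e) hu (fun i _ => hue i)
      (fun _ _ => by simp [hw₀e])
  have hmem : ∀ p, Sum.elim u (fun _ : Unit => w₀) p ∈ W := by
    rintro (i | _)
    exacts [huW i, hw₀W]
  obtain ⟨b, hb⟩ := exists_isHyperbolic_sum_elim hB hsymm huw₀
    (fun p q => hW.isotropic _ (hmem p) _ (hmem q)) (fun _ _ => hz₀z₀) (fun i _ => huz₀ i)
    (fun _ _ => by simp [hw₀z₀])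
  refine ⟨_, _, hb, span_range_eq_of_linearIndependent hmem huw₀ (by simp [hk]), ?_⟩
  simp [z₀]

theorem det_eq_of_map_eq [NeZero (2 : K)] (hW : B.IsLagrangian W) (hB : B.Nondegenerate)
    (hsymm : B.IsSymm) {T T' : V ≃ₗ[K] V} (hT : B.IsOrthogonal T) (hT' : B.IsOrthogonal T')
    (hTT' : W.map (T : V →ₗ[K] V) = W.map (T' : V →ₗ[K] V)) :
    LinearMap.det (T : V →ₗ[K] V) = LinearMap.det (T' : V →ₗ[K] V) := by
  set S := (T.symm : V →ₗ[K] V) ∘ₗ (T' : V →ₗ[K] V)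
  have hS : B.IsOrthogonal S := fun x y => by
    rw [← hT, ← hT' x y]
    simp [S]
  have hSW : ∀ w ∈ W, S w ∈ W := fun w hw => by
    have : T' w ∈ W.map (T : V →ₗ[K] V) := hTT' ▸ mem_map_of_mem hw
    simpa [S] using (mem_map_equiv W).1 this
  have hdet := hW.det_eq_one_of_mapsTo hB hsymm hS hSW
  rwa [LinearMap.det_comp, LinearEquiv.det_coe_symm,
    inv_mul_eq_one₀ (LinearEquiv.isUnit_det' T).ne_zero] at hdet

theorem exists_dual_family (hW : B.IsLagrangian W) {W' : Submodule K V}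
    (hW' : B.IsLagrangian W') (hB : B.Nondegenerate) {k r : ℕ} {a : Fin k → V} {c : Fin r → V}
    (haWW' : ∀ i, a i ∈ W ⊓ W') (hspanW : span K (Set.range (Sum.elim a c)) = W)
    (hk : finrank K (W ⊓ W' : Submodule K V) = k) (hkr : k + r = finrank K W) :
    ∃ d : Fin r → V, (∀ j, d j ∈ W') ∧ ∀ i j, B (c i) (d j) = if i = j then 1 else 0 := by
  have hcW : ∀ i, c i ∈ W := fun i => hspanW ▸ subset_span ⟨.inr i, rfl⟩
  -- The pairing of `W'` against `c` has kernel `W ⊓ W'`, hence is onto `K ^ r`.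
  set φ : W' →ₗ[K] Fin r → K := LinearMap.pi fun i => (B (c i)).domRestrict W'
  have hker : LinearMap.ker φ = (W ⊓ W').comap W'.subtype := by
    ext v
    simp only [LinearMap.mem_ker, mem_comap, subtype_apply, mem_inf, v.2, and_true]
    constructor
    · intro hv
      refine hW.mem_of_forall_apply_eq_zero hB fun w hw => ?_
      have hle : W ≤ LinearMap.ker (B.flip v) := by
        rw [← hspanW, span_le]
        rintro _ ⟨i | i, rfl⟩
        · exact hW'.isotropic _ (haWW' i).2 _ v.2
        · exact congrFun hv i
      exact hle hw
    · intro hv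
      ext i
      exact hW.isotropic _ (hcW i) _ hv
  have hrange : LinearMap.range φ = ⊤ := by
    refine eq_top_of_finrank_eq ?_
    have := LinearMap.finrank_range_add_finrank_ker φ
    rw [hker, (comapSubtypeEquivOfLe inf_le_right).finrank_eq] at this
    have := hW.two_mul_finrank
    have := hW'.two_mul_finrank
    rw [finrank_fin_fun]
    omega
  choose d hd using fun j => LinearMap.range_eq_top.1 hrange (Pi.single j 1)
  exact ⟨fun j => d j, fun j => (d j).2, fun i j => by
    simpa [φ, Pi.single_apply] using congrFun (hd j) i⟩

theorem exists_dual_complements (hW : B.IsLagrangian W) {W' : Submodule K V}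
    (hW' : B.IsLagrangian W') (hB : B.Nondegenerate) :
    ∃ (k r : ℕ) (a : Fin k → V) (c d : Fin r → V), k = finrank K (W ⊓ W' : Submodule K V) ∧
      k + r = finrank K W ∧ LinearIndependent K (Sum.elim a c) ∧ (∀ p, Sum.elim a c p ∈ W) ∧
      (∀ p, Sum.elim a d p ∈ W') ∧ ∀ i j, B (c i) (d j) = if i = j then 1 else 0 := by
  set k := finrank K (W ⊓ W' : Submodule K V)
  obtain ⟨a, ha, hspan_a⟩ := exists_linearIndependent_span_eq (W ⊓ W') rfl
  obtain ⟨C', hC'⟩ := Submodule.exists_isCompl (W ⊓ W')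
  -- `C' ⊓ W` is a complement of `W ⊓ W'` inside `W`, by modularity.
  have hsup : W ⊓ W' ⊔ C' ⊓ W = W := by
    rw [← sup_inf_assoc_of_le _ inf_le_left, hC'.sup_eq_top, top_inf_eq]
  have hdisj : Disjoint (W ⊓ W') (C' ⊓ W) := hC'.disjoint.mono_right inf_le_left
  set r := finrank K (C' ⊓ W : Submodule K V)
  have hkr : k + r = finrank K W := by
    have := Submodule.finrank_sup_add_finrank_inf_eq (W ⊓ W') (C' ⊓ W)
    rw [hsup, hdisj.eq_bot, finrank_bot] at this
    omega
  obtain ⟨c, hc, hspan_c⟩ := exists_linearIndependent_span_eq (C' ⊓ W) rfl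
  have hac : LinearIndependent K (Sum.elim a c) :=
    ha.sum_type hc (by rw [hspan_a, hspan_c]; exact hdisj)
  have haWW' : ∀ i, a i ∈ W ⊓ W' := fun i => hspan_a ▸ subset_span ⟨i, rfl⟩
  have hacW : ∀ p, Sum.elim a c p ∈ W := by
    rintro (i | i)
    exacts [(haWW' i).1, (hspan_c ▸ subset_span ⟨i, rfl⟩ : c i ∈ C' ⊓ W).2]
  obtain ⟨d, hdW', hcd⟩ := hW.exists_dual_family hW' hB haWW'
    (span_range_eq_of_linearIndependent hacW hac (by simpa using hkr)) rfl hkr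
  refine ⟨k, r, a, c, d, rfl, hkr, hac, hacW, ?_, hcd⟩
  rintro (i | i)
  exacts [(haWW' i).2, hdW' i]

theorem exists_isOrthogonal_map_eq [NeZero (2 : K)] (hW : B.IsLagrangian W)
    {W' : Submodule K V} (hW' : B.IsLagrangian W') (hB : B.Nondegenerate) (hsymm : B.IsSymm) :
    ∃ T : V ≃ₗ[K] V, B.IsOrthogonal T ∧ W.map (T : V →ₗ[K] V) = W' ∧
      LinearMap.det (T : V →ₗ[K] V) =
        (-1) ^ (finrank K W - finrank K (W ⊓ W' : Submodule K V)) := by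
  obtain ⟨k, r, a, c, d, hk, hkr, hac, hacW, hadW', hcd⟩ := hW.exists_dual_complements hW' hB
  obtain ⟨b, hb⟩ := exists_isHyperbolic_sum_elim hB hsymm hac
    (fun p q => hW.isotropic _ (hacW p) _ (hacW q))
    (fun i j => hW'.isotropic _ (hadW' (.inr i)) _ (hadW' (.inr j)))
    (fun i j => hW'.isotropic _ (hadW' (.inl i)) _ (hadW' (.inr j))) hcd
  have hcard : 2 * Fintype.card (Fin k ⊕ Fin r) = finrank K V := by
    simp [hkr, hW.two_mul_finrank]
  obtain ⟨T, hT, hTac, hdet⟩ := hb.exists_isOrthogonal_swap hsymm hcard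
  have had : LinearIndependent K (Sum.elim a d) :=
    ((hb.sum_elim_swap hsymm).linearIndependent hsymm).comp _ Sum.inl_injective
  refine ⟨T, hT, ?_, by rw [hdet, Fintype.card_fin]; congr 1; omega⟩
  rw [← span_range_eq_of_linearIndependent hacW hac (by simp [hkr]), map_span, ← Set.range_comp,
    LinearEquiv.coe_coe, hTac]
  refine span_range_eq_of_linearIndependent hadW' had ?_
  have := hW.two_mul_finrank
  have := hW'.two_mul_finrank
  simp only [Fintype.card_sum, Fintype.card_fin]
  omega

theorem exists_isOrthogonal_isFixedPt_map_eq [NeZero (2 : K)] (hW : B.IsLagrangian W)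
    {W' : Submodule K V} (hW' : B.IsLagrangian W') (hB : B.Nondegenerate) (hsymm : B.IsSymm)
    {k : ℕ} (hk : finrank K W = k + 1) {e : V} (he : B e e ≠ 0) :
    ∃ T : V ≃ₗ[K] V, B.IsOrthogonal T ∧ Function.IsFixedPt T e ∧
      W.map (T : V →ₗ[K] V) = W' := by
  have hk' : finrank K W' = k + 1 := by
    have := hW.two_mul_finrank
    have := hW'.two_mul_finrank
    omega
  obtain ⟨l, r, hlr, hl, hel⟩ := hW.exists_isHyperbolic_adapted hB hsymm hk he
  obtain ⟨l', r', hlr', hl', hel'⟩ := hW'.exists_isHyperbolic_adapted hB hsymm hk' he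
  have hcard : 2 * Fintype.card (Fin k ⊕ Unit) = finrank K V := by
    simp [← hW.two_mul_finrank, hk]
  let T := (hlr.basis hsymm hcard).equiv (hlr'.basis hsymm hcard) (Equiv.refl _)
  have hT : ∀ p, T (Sum.elim l r p) = Sum.elim l' r' p := fun p => by
    simpa using (hlr.basis hsymm hcard).equiv_apply p (hlr'.basis hsymm hcard) (Equiv.refl _)
  have hTl : T ∘ l = l' := funext fun i => hT (.inl i)
  have hTr : T ∘ r = r' := funext fun i => hT (.inr i)
  refine ⟨T, hlr.isOrthogonal_of_comp hsymm hcard ?_, ?_, ?_⟩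
  · rwa [LinearEquiv.coe_coe, hTl, hTr]
  · change T e = e
    conv_lhs => rw [hel]
    have hTl₀ : T (l (.inr ())) = l' (.inr ()) := hT (.inl (.inr ()))
    have hTr₀ : T (r (.inr ())) = r' (.inr ()) := hT (.inr (.inr ()))
    rw [map_add, map_smul, hTl₀, hTr₀, ← hel']
  · rw [← hl, map_span, ← Set.range_comp, LinearEquiv.coe_coe, hTl, hl']

end IsLagrangian

end LinearMap.BilinForm

theorem dotProductBilin_isSymm {R : Type*} [CommRing R] (ι : Type*) [Fintype ι] :
    LinearMap.BilinForm.IsSymm (dotProductBilin R R : LinearMap.BilinForm R (ι → R)) :=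
  ⟨dotProduct_comm⟩

theorem dotProductBilin_nondegenerate {R : Type*} [CommRing R] (ι : Type*) [Fintype ι]
    [DecidableEq ι] :
    LinearMap.BilinForm.Nondegenerate (dotProductBilin R R : LinearMap.BilinForm R (ι → R)) := by
  refine ⟨fun x hx => ?_, fun y hy => ?_⟩ <;> ext i
  · simpa using hx (Pi.single i 1)
  · simpa using hy (Pi.single i 1)

/-- The complex orthogonal group `SO_{2n}(ℂ)` acts transitively on the set of
`b`-isotropic `n`-dimensional subspaces of `ℂ^{2n}` lying in a fixed connected component of
the orthogonal Grassmannian (two maximal isotropic subspaces `W, W'` lie in the same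
component iff `n - dim(W ∩ W')` is even); moreover the subgroup `SO_{2n-1}(ℂ)` fixing the
vector `e_{2n}` already acts transitively on this set. -/
theorem stmt10 (n : ℕ) (hn : 0 < n) (W W' : Submodule ℂ (Fin (2 * n) → ℂ))
    (hW : IsIsotropic (2 * n) W) (hW' : IsIsotropic (2 * n) W')
    (hdW : Module.finrank ℂ W = n) (hdW' : Module.finrank ℂ W' = n)
    (hcomp : Even (n - Module.finrank ℂ (W ⊓ W' : Submodule ℂ (Fin (2 * n) → ℂ)))) :
    (∃ T : (Fin (2 * n) → ℂ) ≃ₗ[ℂ] (Fin (2 * n) → ℂ),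
      (∀ z w, bf (2 * n) (T z) (T w) = bf (2 * n) z w) ∧
      LinearMap.det (T : (Fin (2 * n) → ℂ) →ₗ[ℂ] (Fin (2 * n) → ℂ)) = 1 ∧
      W.map (T : (Fin (2 * n) → ℂ) →ₗ[ℂ] (Fin (2 * n) → ℂ)) = W') ∧
    (∃ T : (Fin (2 * n) → ℂ) ≃ₗ[ℂ] (Fin (2 * n) → ℂ),
      (∀ z w, bf (2 * n) (T z) (T w) = bf (2 * n) z w) ∧
      LinearMap.det (T : (Fin (2 * n) → ℂ) →ₗ[ℂ] (Fin (2 * n) → ℂ)) = 1 ∧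
      T (Pi.single (⟨2 * n - 1, by omega⟩ : Fin (2 * n)) 1) =
        Pi.single (⟨2 * n - 1, by omega⟩ : Fin (2 * n)) 1 ∧
      W.map (T : (Fin (2 * n) → ℂ) →ₗ[ℂ] (Fin (2 * n) → ℂ)) = W') := by
  let B : LinearMap.BilinForm ℂ (Fin (2 * n) → ℂ) := dotProductBilin ℂ ℂ
  have hB : B.Nondegenerate := dotProductBilin_nondegenerate _
  have hsymm : B.IsSymm := dotProductBilin_isSymm _
  have hWB : B.IsLagrangian W := ⟨hW, by simp [hdW]⟩
  have hW'B : B.IsLagrangian W' := ⟨hW', by simp [hdW']⟩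
  obtain ⟨T₀, hT₀, hT₀W, hdet₀⟩ := hWB.exists_isOrthogonal_map_eq hW'B hB hsymm
  obtain ⟨T, hT, hTe, hTW⟩ := hWB.exists_isOrthogonal_isFixedPt_map_eq hW'B hB hsymm
    (k := n - 1) (by omega) (e := Pi.single ⟨2 * n - 1, by omega⟩ 1) (by simp [B])
  have hdet : LinearMap.det (T : (Fin (2 * n) → ℂ) →ₗ[ℂ] (Fin (2 * n) → ℂ)) = 1 := by
    rw [← hWB.det_eq_of_map_eq hB hsymm hT₀ hT (hT₀W.trans hTW.symm), hdet₀, hdW]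
    exact hcomp.neg_one_pow
  exact ⟨⟨T, hT, hdet, hTW⟩, ⟨T, hT, hdet, hTe, hTW⟩⟩
end

section
/- If \hat{W} is a b-isotropic n-dimensional subspace of \mathbb{C}^{2n} and V = Span{e_1,...,e_{2n-1}}, then W = \hat{W} \cap V is a b-isotropic subspace of V of dimension n-1, and \hat{W} = W \oplus \mathbb{C}(v + i e_{2n}) for some v in V with b(v,v) = 1 and v b-orthogonal to W. -/
open Module Submodule
open LinearMap (BilinForm)

theorem LinearMap.BilinForm.finrank_add_finrank_le_of_le_orthogonal {K V : Type*} [Field K]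
    [AddCommGroup V] [Module K V] [FiniteDimensional K V] {B : BilinForm K V}
    (hB : B.Nondegenerate) {S T : Submodule K V} (h : S ≤ B.orthogonal T) :
    finrank K S + finrank K T ≤ finrank K V := by
  have hS := Submodule.finrank_mono h
  rw [B.finrank_orthogonal hB] at hS
  have hT := T.finrank_le
  omega

theorem dotProductBilin_nondegenerate_s11 (K ι : Type*) [Field K] [Fintype ι] :
    (dotProductBilin K K : BilinForm K (ι → K)).Nondegenerate :=
  ⟨fun x hx => dotProduct_eq_zero x hx,
    fun y hy => dotProduct_eq_zero y fun x => by simpa [dotProduct_comm] using hy x⟩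

section Decomposition

variable {K V : Type*} [Field K] [AddCommGroup V] [Module K V] (f : V →ₗ[K] K)
  {W : Submodule K V} {u : V}

theorem Submodule.inf_ker_sup_span_singleton (hu : u ∈ W) (hfu : f u ≠ 0) :
    W ⊓ LinearMap.ker f ⊔ K ∙ u = W := by
  have h := congrArg (· ⊓ W) (f.span_singleton_sup_ker_eq_top hfu)
  simp only [top_inf_eq] at h
  rwa [sup_inf_assoc_of_le _ (span_le.mpr (Set.singleton_subset_iff.mpr hu)), sup_comm,
    inf_comm] at h

theorem Submodule.inf_ker_inf_span_singleton (hfu : f u ≠ 0) :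
    W ⊓ LinearMap.ker f ⊓ K ∙ u = ⊥ :=
  (Disjoint.mono_left inf_le_right
    (disjoint_span_singleton.mpr fun hu => absurd (LinearMap.mem_ker.mp hu) hfu)).eq_bot

theorem Submodule.finrank_inf_ker_add_one [FiniteDimensional K V] (hu : u ∈ W) (hfu : f u ≠ 0) :
    finrank K (W ⊓ LinearMap.ker f : Submodule K V) + 1 = finrank K W := by
  have hu' : u ∉ W ⊓ LinearMap.ker f := fun h => hfu (LinearMap.mem_ker.mp h.2)
  conv_rhs => rw [← W.inf_ker_sup_span_singleton f hu hfu, finrank_sup_span_singleton hu']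

end Decomposition

noncomputable def bfBilin (m : ℕ) : BilinForm ℂ (Fin m → ℂ) := dotProductBilin ℂ ℂ

theorem bf_eq_dotProduct (m : ℕ) (z w : Fin m → ℂ) : bf m z w = z ⬝ᵥ w := rfl

@[simp]
theorem bfBilin_apply (m : ℕ) (z w : Fin m → ℂ) : bfBilin m z w = bf m z w := rfl

theorem isIsotropic_iff_le_orthogonal {m : ℕ} {W : Submodule ℂ (Fin m → ℂ)} :
    IsIsotropic m W ↔ W ≤ (bfBilin m).orthogonal W :=
  ⟨fun h _ hx _ hy => h _ hy _ hx, fun h _ hx _ hy => h hy _ hx⟩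

theorem IsIsotropic.exists_mem_apply_ne_zero {m : ℕ} {W : Submodule ℂ (Fin m → ℂ)}
    (hW : IsIsotropic m W) (hdim : m ≤ 2 * finrank ℂ W) (i : Fin m) : ∃ z ∈ W, z i ≠ 0 := by
  by_contra! h
  have he : Pi.single i 1 ∉ W := fun he => by simpa using h _ he
  have hle : W ⊔ ℂ ∙ Pi.single i 1 ≤ (bfBilin m).orthogonal W := by
    refine sup_le (isIsotropic_iff_le_orthogonal.mp hW) ?_
    rw [span_singleton_le_iff_mem, LinearMap.BilinForm.mem_orthogonal_iff]
    intro z hz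
    rw [bfBilin_apply, bf_eq_dotProduct, dotProduct_single, mul_one]
    exact h z hz
  have := LinearMap.BilinForm.finrank_add_finrank_le_of_le_orthogonal
    (dotProductBilin_nondegenerate_s11 ℂ (Fin m)) hle
  rw [finrank_sup_span_singleton he, finrank_fin_fun] at this
  omega

/-- If `Ŵ` is a `b`-isotropic `n`-dimensional subspace of `ℂ^{2n}` and
`V = Span{e₁, …, e_{2n-1}}` (the kernel of the last coordinate), then `W = Ŵ ∩ V` is a
`b`-isotropic subspace of `V` of dimension `n-1`, and `Ŵ = W ⊕ ℂ(v + i e_{2n})` for some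
`v ∈ V` with `b(v,v) = 1` and `v` `b`-orthogonal to `W`. -/
theorem stmt11 (n : ℕ) (hn : 0 < n) (Wh : Submodule ℂ (Fin (2 * n) → ℂ))
    (hWh : IsIsotropic (2 * n) Wh) (hd : Module.finrank ℂ Wh = n)
    (V : Submodule ℂ (Fin (2 * n) → ℂ))
    (hV : V = LinearMap.ker (LinearMap.proj (⟨2 * n - 1, by omega⟩ : Fin (2 * n)) :
      (Fin (2 * n) → ℂ) →ₗ[ℂ] ℂ)) :
    IsIsotropic (2 * n) (Wh ⊓ V) ∧
    Module.finrank ℂ (Wh ⊓ V : Submodule ℂ (Fin (2 * n) → ℂ)) = n - 1 ∧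
    ∃ v ∈ V, bf (2 * n) v v = 1 ∧ (∀ w ∈ Wh ⊓ V, bf (2 * n) v w = 0) ∧
      Wh = (Wh ⊓ V) ⊔
        Submodule.span ℂ {v + Complex.I • (Pi.single (⟨2 * n - 1, by omega⟩ : Fin (2 * n)) 1 : Fin (2 * n) → ℂ)} ∧
      (Wh ⊓ V) ⊓
        Submodule.span ℂ {v + Complex.I • (Pi.single (⟨2 * n - 1, by omega⟩ : Fin (2 * n)) 1 : Fin (2 * n) → ℂ)} = ⊥ := by
  subst hV
  set last : Fin (2 * n) := ⟨2 * n - 1, by omega⟩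
  set f : (Fin (2 * n) → ℂ) →ₗ[ℂ] ℂ := LinearMap.proj last
  obtain ⟨z, hzW, hz⟩ := hWh.exists_mem_apply_ne_zero (by omega) last
  obtain ⟨u, huW, hu⟩ : ∃ u ∈ Wh, u last = Complex.I :=
    ⟨(Complex.I * (z last)⁻¹) • z, Wh.smul_mem _ hzW, by simp [mul_assoc, inv_mul_cancel₀ hz]⟩
  have hfu : f u ≠ 0 := by simp [f, hu]
  refine ⟨fun w hw w' hw' => hWh w hw.1 w' hw'.1, ?_, u - Complex.I • Pi.single last 1, ?_, ?_,
    ?_, ?_, ?_⟩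
  · have := Wh.finrank_inf_ker_add_one f huW hfu
    omega
  · simpa [f, sub_eq_zero] using hu
  · have huu : u ⬝ᵥ u = 0 := hWh u huW u huW
    simp only [bf_eq_dotProduct, sub_dotProduct, dotProduct_sub, smul_dotProduct, dotProduct_smul,
      dotProduct_single, single_dotProduct, Pi.sub_apply, Pi.smul_apply, Pi.single_eq_same,
      smul_eq_mul, huu, hu]
    linear_combination -Complex.I_sq
  · rintro w ⟨hwW, hwV⟩
    have huw : u ⬝ᵥ w = 0 := hWh u huW w hwW
    have hw : w last = 0 := hwV
    rw [bf_eq_dotProduct, sub_dotProduct, smul_dotProduct, single_dotProduct, huw, hw]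
    simp
  · rw [sub_add_cancel, Wh.inf_ker_sup_span_singleton f huW hfu]
  · rw [sub_add_cancel, Wh.inf_ker_inf_span_singleton f hfu]
end

section
/- For a generic b-isotropic n-plane \hat{W} in \mathbb{C}^{2n}: if W = \hat{W} \cap V is h-nondegenerate for a nondegenerate Hermitian form h of signature (p,q) on V = \mathbb{C}^{2n-1} (p+q = 2n-1, p even), then the restriction of h to W has signature (p/2, (q-1)/2). -/
/-!
Take an `h`-orthogonal basis `f` of `W`. The conjugation `τ z = E_{p,q} z̄` (`conjE`) satisfies
`h(z, τ w) = b(z, w)` and `h(τ z, τ w) = conj h(z, w)`, so, `W` being `b`-isotropic, `f` together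
with `τ ∘ f` is an `h`-orthogonal family of `2(n-1)` vectors in which every sign of `f` occurs
twice. A positive (negative) definite subspace of `ℂ^{2n-1}` has dimension at most `p` (`q`),
whence `2 P ≤ p` and `2 N ≤ q` for the numbers `P`, `N` of positive and negative vectors of `f`.
As `2 P + 2 N = p + q - 1` and `p` is even, `2 P = p` and `2 N = q - 1`.
-/

open scoped ComplexConjugate

/-- The Hermitian form `h(z,w) = zᵗ E_{p,q} w̄` of signature `(p, m-p)` on `ℂ^m`. -/
noncomputable def hf (m p : ℕ) (z w : Fin m → ℂ) : ℂ :=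
  ∑ j, z j * (if (j : ℕ) < p then 1 else -1) * conj (w j)

open Module

namespace LinearMap

variable {𝕜 M : Type*} [RCLike 𝕜] [AddCommGroup M] [Module 𝕜 M] {B : M →ₗ⋆[𝕜] M →ₗ[𝕜] 𝕜}

theorem IsSymm.exists_mem_apply_self_ne_zero (hB : B.IsSymm) {W : Submodule 𝕜 M} (hW : W ≠ ⊥)
    (hnd : ∀ w ∈ W, (∀ u ∈ W, B u w = 0) → w = 0) : ∃ w ∈ W, B w w ≠ 0 := by
  by_contra! hiso
  obtain ⟨w, hw, hw0⟩ := Submodule.exists_mem_ne_zero_of_ne_bot hW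
  refine hw0 (hnd w hw fun u hu => ?_)
  -- polarisation along `u + B w u • w`
  have h := hiso (u + B w u • w) (W.add_mem hu (W.smul_mem _ hw))
  have hwu : B w u = starRingEnd 𝕜 (B u w) := (hB.eq u w).symm
  simp only [map_add, map_smulₛₗ, add_apply, smul_apply, smul_eq_mul, hiso u hu, hiso w hw,
    mul_zero, zero_add, add_zero] at h
  rw [hwu, RCLike.conj_conj, RingHom.id_apply, RCLike.conj_mul, RCLike.mul_conj, ← two_mul] at h
  simpa using h

theorem IsSymm.exists_isOrthoᵢ [FiniteDimensional 𝕜 M] (hB : B.IsSymm) {k : ℕ}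
    {W : Submodule 𝕜 M} (hk : finrank 𝕜 W = k) (hnd : ∀ w ∈ W, (∀ u ∈ W, B u w = 0) → w = 0) :
    ∃ f : Fin k → M, (∀ i, f i ∈ W) ∧ B.IsOrthoᵢ f ∧ ∀ i, B (f i) (f i) ≠ 0 := by
  induction k generalizing W with
  | zero => exact ⟨Fin.elim0, fun i => i.elim0, fun i => i.elim0, fun i => i.elim0⟩
  | succ k ih =>
    have hW : W ≠ ⊥ := by rintro rfl; simp at hk
    obtain ⟨w, hw, hww⟩ := hB.exists_mem_apply_self_ne_zero hW hnd
    set W' := W ⊓ ker (B w)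
    have hW'W : W' ≤ W := inf_le_left
    have mem_W' {x} : x ∈ W' ↔ x ∈ W ∧ B w x = 0 := Iff.rfl
    -- `x ↦ x - (B w x / B w w) • w` is the `B`-orthogonal projection of `W` onto `W'`
    have proj_mem {x} (hx : x ∈ W) : x - (B w x / B w w) • w ∈ W' :=
      ⟨W.sub_mem hx (W.smul_mem _ hw), by simp [div_mul_cancel₀ _ hww]⟩
    have hW'lt : W' < W := lt_of_le_of_ne hW'W fun h => hww (h ▸ hw : w ∈ W').2
    have hW'le : W ≤ W' ⊔ 𝕜 ∙ w := fun x hx => by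
      simpa using Submodule.add_mem_sup (proj_mem hx) (Submodule.mem_span_singleton_self w |>
        (𝕜 ∙ w).smul_mem (B w x / B w w))
    have hk' : finrank 𝕜 W' = k := by
      have h1 := Submodule.finrank_lt_finrank_of_lt hW'lt
      have h2 := (Submodule.finrank_mono hW'le).trans
        (Submodule.finrank_add_le_finrank_add_finrank _ _)
      rw [finrank_span_singleton fun h => hww (by simp [h])] at h2
      omega
    have hnd' : ∀ z ∈ W', (∀ u ∈ W', B u z = 0) → z = 0 := fun z hz hzu =>
      hnd z (hW'W hz) fun u hu => by
        simpa [(mem_W'.1 hz).2] using hzu _ (proj_mem hu)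
    obtain ⟨f, hfW', hf, hff⟩ := ih hk' hnd'
    refine ⟨Fin.cons w f, Fin.cases hw fun i => hW'W (hfW' i), ?_, Fin.cases hww hff⟩
    rw [isOrthoᵢ_def]
    refine Fin.cases (Fin.cases (absurd rfl) fun j _ => (hfW' j).2) fun i => Fin.cases
      (fun _ => hB.isRefl _ _ (hfW' i).2) fun j hij => hf (ne_of_apply_ne Fin.succ hij)

theorem IsOrthoᵢ.apply_sum_smul_self {ι : Type*} [Fintype ι] {g : ι → M} (hg : B.IsOrthoᵢ g)
    (c : ι → 𝕜) :
    B (∑ i, c i • g i) (∑ i, c i • g i) = ∑ i, ((‖c i‖ ^ 2 : ℝ) : 𝕜) * B (g i) (g i) := by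
  classical
  simp only [map_sum, map_smulₛₗ, sum_apply, smul_apply, smul_eq_mul]
  refine Finset.sum_congr rfl fun i _ => ?_
  rw [Finset.sum_eq_single i (fun j _ hji => by rw [hg hji, mul_zero]) (by simp),
    RingHom.id_apply, ← mul_assoc, RCLike.mul_conj]
  push_cast
  ring

theorem IsOrthoᵢ.re_apply_self_pos_of_mem_span {ι : Type*} [Fintype ι] {g : ι → M}
    (hg : B.IsOrthoᵢ g) (hpos : ∀ i, 0 < RCLike.re (B (g i) (g i))) {z : M}
    (hz : z ∈ Submodule.span 𝕜 (Set.range g)) (hz0 : z ≠ 0) : 0 < RCLike.re (B z z) := by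
  obtain ⟨c, rfl⟩ := (Submodule.mem_span_range_iff_exists_fun 𝕜).1 hz
  obtain ⟨i, hi⟩ : ∃ i, c i ≠ 0 := by
    by_contra! h
    simp [h] at hz0
  rw [hg.apply_sum_smul_self, map_sum]
  simp only [RCLike.re_ofReal_mul]
  exact Finset.sum_pos' (fun j _ => by have := hpos j; positivity)
    ⟨i, Finset.mem_univ i, by have := hpos i; positivity⟩

theorem IsOrthoᵢ.re_apply_self_neg_of_mem_span {ι : Type*} [Fintype ι] {g : ι → M}
    (hg : B.IsOrthoᵢ g) (hneg : ∀ i, RCLike.re (B (g i) (g i)) < 0) {z : M}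
    (hz : z ∈ Submodule.span 𝕜 (Set.range g)) (hz0 : z ≠ 0) : RCLike.re (B z z) < 0 := by
  have hg' : (-B).IsOrthoᵢ g := isOrthoᵢ_def.2 fun i j hij => by simp [isOrthoᵢ_def.1 hg i j hij]
  simpa using hg'.re_apply_self_pos_of_mem_span (by simpa using hneg) hz hz0

end LinearMap

theorem Submodule.finrank_le_card_of_eq_zero {K ι : Type*} [Field K] [Fintype ι]
    (U : Submodule K (ι → K)) (s : Finset ι) (hs : ∀ z ∈ U, (∀ i ∈ s, z i = 0) → z = 0) :
    finrank K U ≤ s.card := by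
  let L : U →ₗ[K] s → K := (LinearMap.funLeft K K ((↑) : s → ι)).comp U.subtype
  have hL : Function.Injective L := by
    rw [← LinearMap.ker_eq_bot, LinearMap.ker_eq_bot']
    exact fun z hz => Subtype.ext (hs z z.2 fun i hi => congrFun hz ⟨i, hi⟩)
  simpa using LinearMap.finrank_le_finrank_of_injective hL

section HermitianFormOfSignature

variable {m p : ℕ}

-- Mathlib's sesquilinear forms are conjugate-linear in the first argument, whence the swap.
noncomputable def hForm (m p : ℕ) : (Fin m → ℂ) →ₗ⋆[ℂ] (Fin m → ℂ) →ₗ[ℂ] ℂ :=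
  LinearMap.mk₂'ₛₗ (starRingEnd ℂ) (RingHom.id ℂ) (fun w z => hf m p z w)
    (fun _ _ _ => by simp only [hf, Pi.add_apply, map_add, mul_add, Finset.sum_add_distrib])
    (fun _ _ _ => by
      simp only [hf, Pi.smul_apply, smul_eq_mul, map_mul, Finset.mul_sum]
      exact Finset.sum_congr rfl fun _ _ => by ring)
    (fun _ _ _ => by simp only [hf, Pi.add_apply, add_mul, Finset.sum_add_distrib])
    (fun _ _ _ => by
      simp only [hf, Pi.smul_apply, smul_eq_mul, RingHom.id_apply, Finset.mul_sum]
      exact Finset.sum_congr rfl fun _ _ => by ring)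

theorem hForm_apply (w z : Fin m → ℂ) : hForm m p w z = hf m p z w := rfl

theorem hForm_isSymm : (hForm m p).IsSymm := by
  refine LinearMap.isSymm_def.2 fun w z => ?_
  simp only [hForm_apply, hf, map_sum, map_mul, Complex.conj_conj]
  refine Finset.sum_congr rfl fun j _ => ?_
  split_ifs <;> simp <;> ring

noncomputable def conjE (m p : ℕ) (z : Fin m → ℂ) : Fin m → ℂ :=
  fun j => (if (j : ℕ) < p then 1 else -1) * conj (z j)

theorem hf_conjE_right (z w : Fin m → ℂ) : hf m p z (conjE m p w) = bf m z w := by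
  unfold hf conjE bf
  refine Finset.sum_congr rfl fun j _ => ?_
  split_ifs <;> simp

theorem hf_conjE_conjE (z w : Fin m → ℂ) :
    hf m p (conjE m p z) (conjE m p w) = conj (hf m p z w) := by
  unfold hf conjE
  rw [map_sum]
  refine Finset.sum_congr rfl fun j _ => ?_
  split_ifs <;> simp

theorem re_hf_self (z : Fin m → ℂ) :
    (hf m p z z).re = ∑ j : Fin m, (if (j : ℕ) < p then 1 else -1) * Complex.normSq (z j) := by
  simp only [hf, Complex.re_sum]
  refine Finset.sum_congr rfl fun j _ => ?_
  rw [mul_right_comm, Complex.mul_conj]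
  split_ifs <;> simp

theorem finrank_le_of_re_hf_pos {U : Submodule ℂ (Fin m → ℂ)}
    (hU : ∀ z ∈ U, z ≠ 0 → 0 < (hf m p z z).re) : finrank ℂ U ≤ p := by
  refine (U.finrank_le_card_of_eq_zero {j : Fin m | (j : ℕ) < p} fun z hz hs => ?_).trans ?_
  · by_contra hz0
    refine (hU z hz hz0).not_ge ?_
    rw [re_hf_self]
    refine Finset.sum_nonpos fun j _ => ?_
    split_ifs with hj
    · simp [hs j (by simpa using hj)]
    · simpa using Complex.normSq_nonneg (z j)
  · refine (Finset.card_le_card_of_injOn (↑) (t := Finset.range p) (fun j hj => ?_)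
      Fin.val_injective.injOn).trans (Finset.card_range p).le
    simpa using hj

theorem finrank_le_of_re_hf_neg {U : Submodule ℂ (Fin m → ℂ)}
    (hU : ∀ z ∈ U, z ≠ 0 → (hf m p z z).re < 0) : finrank ℂ U ≤ m - p := by
  refine (U.finrank_le_card_of_eq_zero {j : Fin m | p ≤ (j : ℕ)} fun z hz hs => ?_).trans ?_
  · by_contra hz0
    refine (hU z hz hz0).not_ge ?_
    rw [re_hf_self]
    refine Finset.sum_nonneg fun j _ => ?_
    split_ifs with hj
    · simpa using Complex.normSq_nonneg (z j)
    · simp [hs j (by simpa using hj)]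
  · refine (Finset.card_le_card_of_injOn (fun j : Fin m => (j : ℕ) - p)
      (t := Finset.range (m - p)) (fun j hj => ?_) fun i hi j hj hij => ?_).trans
      (Finset.card_range _).le
    · simp only [Finset.coe_filter, Finset.mem_univ, true_and, Set.mem_ofPred_eq] at hj
      simp only [Finset.coe_range, Set.mem_Iio]
      omega
    · simp only [Finset.coe_filter, Finset.mem_univ, true_and, Set.mem_ofPred_eq] at hi hj hij
      exact Fin.ext (by omega)

theorem card_le_of_re_hf_pos {ι : Type*} [Fintype ι] {g : ι → Fin m → ℂ}
    (hg : (hForm m p).IsOrthoᵢ g) (hpos : ∀ i, 0 < (hf m p (g i) (g i)).re) :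
    Fintype.card ι ≤ p := by
  have hli := LinearMap.linearIndependent_of_isOrthoᵢ hg fun i h =>
    (hpos i).ne' (by rw [← hForm_apply, h, Complex.zero_re])
  rw [← finrank_span_eq_card hli]
  exact finrank_le_of_re_hf_pos fun z hz hz0 => hg.re_apply_self_pos_of_mem_span hpos hz hz0

theorem card_le_of_re_hf_neg {ι : Type*} [Fintype ι] {g : ι → Fin m → ℂ}
    (hg : (hForm m p).IsOrthoᵢ g) (hneg : ∀ i, (hf m p (g i) (g i)).re < 0) :
    Fintype.card ι ≤ m - p := by
  have hli := LinearMap.linearIndependent_of_isOrthoᵢ hg fun i h =>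
    (hneg i).ne (by rw [← hForm_apply, h, Complex.zero_re])
  rw [← finrank_span_eq_card hli]
  exact finrank_le_of_re_hf_neg fun z hz hz0 => hg.re_apply_self_neg_of_mem_span hneg hz hz0

theorem isOrthoᵢ_sum_elim_conjE {ι : Type*} {g : ι → Fin m → ℂ} (hg : (hForm m p).IsOrthoᵢ g)
    (hb : ∀ i j, bf m (g i) (g j) = 0) :
    (hForm m p).IsOrthoᵢ (Sum.elim g (conjE m p ∘ g)) := by
  rw [LinearMap.isOrthoᵢ_def]
  rintro (i | i) (j | j) hij <;>
    simp only [Sum.elim_inl, Sum.elim_inr, Function.comp_apply, hForm_apply]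
  · exact hg (ne_of_apply_ne Sum.inl hij)
  · rw [← hForm_apply, ← hForm_isSymm.eq, hForm_apply, hf_conjE_right, hb, map_zero]
  · rw [hf_conjE_right, hb]
  · rw [hf_conjE_conjE, ← hForm_apply, hg (ne_of_apply_ne Sum.inr hij), map_zero]

theorem two_mul_card_le_of_re_hf_pos {ι : Type*} [Fintype ι] {g : ι → Fin m → ℂ}
    (hg : (hForm m p).IsOrthoᵢ g) (hb : ∀ i j, bf m (g i) (g j) = 0)
    (hpos : ∀ i, 0 < (hf m p (g i) (g i)).re) : 2 * Fintype.card ι ≤ p := by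
  simpa [two_mul] using card_le_of_re_hf_pos (isOrthoᵢ_sum_elim_conjE hg hb)
    (by rintro (i | i) <;> simp [hf_conjE_conjE, hpos])

theorem two_mul_card_le_of_re_hf_neg {ι : Type*} [Fintype ι] {g : ι → Fin m → ℂ}
    (hg : (hForm m p).IsOrthoᵢ g) (hb : ∀ i j, bf m (g i) (g j) = 0)
    (hneg : ∀ i, (hf m p (g i) (g i)).re < 0) : 2 * Fintype.card ι ≤ m - p := by
  simpa [two_mul] using card_le_of_re_hf_neg (isOrthoᵢ_sum_elim_conjE hg hb)
    (by rintro (i | i) <;> simp [hf_conjE_conjE, hneg])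

end HermitianFormOfSignature

open Finset in
theorem stmt12_general (n p q : ℕ) (hpq : p + q = 2 * n - 1) (hp : Even p)
    (W : Submodule ℂ (Fin (2 * n - 1) → ℂ))
    (hiso : ∀ w ∈ W, ∀ w' ∈ W, bf (2 * n - 1) w w' = 0)
    (hdim : Module.finrank ℂ W = n - 1)
    (hnondeg : ∀ w ∈ W, (∀ u ∈ W, hf (2 * n - 1) p w u = 0) → w = 0) :
    ∃ f : Fin (n - 1) → (Fin (2 * n - 1) → ℂ),
      (∀ i, f i ∈ W) ∧ LinearIndependent ℂ f ∧
      (∀ i j, i ≠ j → hf (2 * n - 1) p (f i) (f j) = 0) ∧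
      (Finset.univ.filter fun i => 0 < (hf (2 * n - 1) p (f i) (f i)).re).card = p / 2 ∧
      (Finset.univ.filter fun i => (hf (2 * n - 1) p (f i) (f i)).re < 0).card = (q - 1) / 2 := by
  obtain ⟨f, hfW, horth, hne⟩ := hForm_isSymm.exists_isOrthoᵢ hdim hnondeg
  refine ⟨f, hfW, LinearMap.linearIndependent_of_isOrthoᵢ horth hne,
    fun i j hij => horth hij.symm, ?_⟩
  have hb (s : Set (Fin (n - 1))) (i j : s) : bf _ (f i) (f j) = 0 := hiso _ (hfW i) _ (hfW j)
  set P := univ.filter fun i => 0 < (hf (2 * n - 1) p (f i) (f i)).re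
  set N := univ.filter fun i => (hf (2 * n - 1) p (f i) (f i)).re < 0
  have hP : 2 * #P ≤ p := by
    simpa using two_mul_card_le_of_re_hf_pos (horth.comp_of_injective Subtype.val_injective)
      (hb P) fun i : P => (mem_filter.1 i.2).2
  have hN : 2 * #N ≤ 2 * n - 1 - p := by
    simpa using two_mul_card_le_of_re_hf_neg (horth.comp_of_injective Subtype.val_injective)
      (hb N) fun i : N => (mem_filter.1 i.2).2
  have hre (i) : (hf (2 * n - 1) p (f i) (f i)).re ≠ 0 := fun h =>
    hne i (Complex.ext h (Complex.conj_eq_iff_im.1 (hForm_isSymm.eq (f i) (f i))))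
  have hPN : #P + #N = n - 1 := by
    have hN' : N = univ.filter fun i => ¬ 0 < (hf (2 * n - 1) p (f i) (f i)).re :=
      filter_congr fun i _ => (not_lt.trans (le_iff_lt_or_eq.trans (or_iff_left (hre i)))).symm
    simpa [hN'] using card_filter_add_card_filter_not (s := univ)
      fun i => 0 < (hf (2 * n - 1) p (f i) (f i)).re
  obtain ⟨t, ht⟩ := hp
  constructor <;> omega

/-- For a generic `b`-isotropic `n`-plane `Ŵ` in `ℂ^{2n}`: if `W = Ŵ ∩ V` is
`h`-nondegenerate for a nondegenerate Hermitian form `h` of signature `(p,q)` on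
`V = ℂ^{2n-1}` (`p + q = 2n - 1`, `p` even), then the restriction of `h` to `W` has
signature `(p/2, (q-1)/2)`: any `h`-orthogonal basis of `W` has exactly `p/2` positive and
`(q-1)/2` negative directions; here we assert the existence of such a basis with these
counts. -/
theorem stmt12 (n p q : ℕ) (hn : 0 < n) (hpq : p + q = 2 * n - 1) (hp : Even p)
    (W : Submodule ℂ (Fin (2 * n - 1) → ℂ))
    (hiso : ∀ w ∈ W, ∀ w' ∈ W, bf (2 * n - 1) w w' = 0)
    (hdim : Module.finrank ℂ W = n - 1)
    (hnondeg : ∀ w ∈ W, (∀ u ∈ W, hf (2 * n - 1) p w u = 0) → w = 0) :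
    ∃ f : Fin (n - 1) → (Fin (2 * n - 1) → ℂ),
      (∀ i, f i ∈ W) ∧ LinearIndependent ℂ f ∧
      (∀ i j, i ≠ j → hf (2 * n - 1) p (f i) (f j) = 0) ∧
      (Finset.univ.filter fun i => 0 < (hf (2 * n - 1) p (f i) (f i)).re).card = p / 2 ∧
      (Finset.univ.filter fun i => (hf (2 * n - 1) p (f i) (f i)).re < 0).card = (q - 1) / 2 :=
  stmt12_general n p q hpq hp W hiso hdim hnondeg
end
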